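/- Assume in addition that inf_Θ g > 0 (so that log g is bounded). Let t ∈ ℝ and let μ be a T-invariant probability measure on (Θ, 𝓑). If μ(N_t) = 1, then γ(μ) ≤ t. -/

import Mathlib

open MeasureTheory Filter Topology

/-- The general setting of the paper: a measurable base system with invertible
driving map `T`, a concave fibre function `h` (with its derivative `h'` on `[0,∞)`)
and a bounded measurable positive function `g`. -/
structure Setting (Θ : Type*) [MeasurableSpace Θ] where
  T : Θ → Θ
  Tinv : Θ → Θ
  left_inv : Function.LeftInverse Tinv T
  right_inv : Function.RightInverse Tinv T
  T_meas : Measurable T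
  Tinv_meas : Measurable Tinv
  h : ℝ → ℝ
  h' : ℝ → ℝ
  h_hasDeriv : ∀ x ∈ Set.Ici (0 : ℝ), HasDerivWithinAt h (h' x) (Set.Ici 0) x
  h'_cont : ContinuousOn h' (Set.Ici 0)
  h_strictConcave : StrictConcaveOn ℝ (Set.Ici 0) h
  h_zero : h 0 = 0
  h'_pos : ∀ x : ℝ, 0 < x → 0 < h' x
  h'_zero : h' 0 = 1
  h_sublinear : Tendsto (fun x => h x / x) atTop (𝓝 0)
  g : Θ → ℝ
  g_pos : ∀ θ, 0 < g θ
  g_bdd : ∃ C : ℝ, ∀ θ, g θ ≤ C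
  g_meas : Measurable g

namespace Setting

variable {Θ : Type*} [MeasurableSpace Θ]

/-- The fibre maps `f_t(θ,x) = e^{-t} g(θ) h(x)`. -/
noncomputable def f (S : Setting Θ) (t : ℝ) (θ : Θ) (x : ℝ) : ℝ :=
  Real.exp (-t) * S.g θ * S.h x

/-- The iterated fibre maps: `fn t 0 θ x = x` and
`fn t (n+1) θ x = f t (T^[n] θ) (fn t n θ x)`, so that `fn t 1 = f t`. -/
noncomputable def fn (S : Setting Θ) (t : ℝ) : ℕ → Θ → ℝ → ℝ
  | 0, _, x => x
  | n + 1, θ, x => S.f t (S.T^[n] θ) (S.fn t n θ x)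

/-- `ψ_{t,n}(θ) = f_t^n(T^{-n}θ, M)`. -/
noncomputable def ψ (S : Setting Θ) (t M : ℝ) (n : ℕ) (θ : Θ) : ℝ :=
  S.fn t n (S.Tinv^[n] θ) M

/-- The maximal invariant function `φ_t(θ) = inf_{n ≥ 1} ψ_{t,n}(θ)`. -/
noncomputable def φ (S : Setting Θ) (t M : ℝ) (θ : Θ) : ℝ :=
  ⨅ n : ℕ, S.ψ t M (n + 1) θ

/-- The zero set `N_t = {θ : φ_t(θ) = 0}`. -/
noncomputable def Nset (S : Setting Θ) (t M : ℝ) : Set Θ := {θ | S.φ t M θ = 0}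

/-- The critical parameter `t_c(θ) = inf {t : φ_t(θ) = 0}`. -/
noncomputable def tc (S : Setting Θ) (M : ℝ → ℝ) (θ : Θ) : ℝ :=
  sInf {t : ℝ | S.φ t (M t) θ = 0}

/-- The bifurcation set `S_t = {θ : t_c(θ) = t}`. -/
noncomputable def Sset (S : Setting Θ) (M : ℝ → ℝ) (t : ℝ) : Set Θ :=
  {θ | S.tc M θ = t}

/-- The Birkhoff average `Γ^{(n)}(θ) = (1/n) ∑_{k=1}^n log g(T^{-k}θ)`. -/
noncomputable def Γn (S : Setting Θ) (n : ℕ) (θ : Θ) : ℝ :=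
  (∑ k ∈ Finset.range n, Real.log (S.g (S.Tinv^[k + 1] θ))) / n

/-- The lower backwards Lyapunov average `Γ(θ) = liminf_n Γ^{(n)}(θ)`. -/
noncomputable def Γ (S : Setting Θ) (θ : Θ) : ℝ :=
  Filter.liminf (fun n : ℕ => S.Γn n θ) Filter.atTop

/-- The averaged exponent `γ(μ) = ∫ log g dμ`. -/
noncomputable def γfn (S : Setting Θ) (μ : Measure Θ) : ℝ :=
  ∫ θ, Real.log (S.g θ) ∂μ

/-- The function `H(x) = log (h(x)/x)`. -/
noncomputable def Hfn (S : Setting Θ) (x : ℝ) : ℝ := Real.log (S.h x / x)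

end Setting

/-!
Write `H(x) = log (h(x)/x)`. Taking logarithms in `ψ_{t,n+1} = f_t(T⁻¹θ, ψ_{t,n}(T⁻¹θ))` gives
`log ψ_{t,n+1} = (log ψ_{t,n} + log g - t + H ∘ ψ_{t,n}) ∘ T⁻¹`, so by `T`-invariance of `μ` the
integrals `L_n = ∫ log ψ_{t,n} dμ` satisfy `L_{n+1} - L_n = γ(μ) - t + ∫ H ∘ ψ_{t,n} dμ`.
Since `ψ_{t,n}` is antitone with infimum `φ_t`, on `N_t` it decreases to `0`, where
`h(x)/x → h'(0) = 1`; concavity bounds `H` on `(0, M]`, so by dominated convergence the increments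
of `L` tend to `γ(μ) - t`. As `ψ_{t,n} ≤ M`, the `L_n` are bounded above by `log M`, and their
Cesàro means force `γ(μ) - t ≤ 0`. The bound `inf g > 0` makes `log g`, hence each `log ψ_{t,n}`,
integrable.
-/

theorem le_zero_of_bddAbove_of_tendsto_sub {L : ℕ → ℝ} {a : ℝ} (hL : BddAbove (Set.range L))
    (h : Tendsto (fun n => L (n + 1) - L n) atTop (𝓝 a)) : a ≤ 0 := by
  obtain ⟨C, hC⟩ := hL
  have hmean : Tendsto (fun n : ℕ => (n⁻¹ : ℝ) * (L n - L 0)) atTop (𝓝 a) := by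
    simpa only [Finset.sum_range_sub] using h.cesaro
  have hbound : Tendsto (fun n : ℕ => (n⁻¹ : ℝ) * (C - L 0)) atTop (𝓝 0) := by
    simpa using (tendsto_inv_atTop_zero.comp tendsto_natCast_atTop_atTop).mul_const (C - L 0)
  refine le_of_tendsto_of_tendsto' hmean hbound fun n => ?_
  gcongr
  exact hC ⟨n, rfl⟩

theorem Measurable.comp_of_continuousOn {α X Y : Type*} [MeasurableSpace α]
    [TopologicalSpace X] [MeasurableSpace X] [OpensMeasurableSpace X]
    [TopologicalSpace Y] [MeasurableSpace Y] [BorelSpace Y] {f : X → Y} {s : Set X}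
    {u : α → X} (hu : Measurable u) (hf : ContinuousOn f s) (hus : ∀ x, u x ∈ s) :
    Measurable fun x => f (u x) :=
  hf.domRestrict.measurable.comp (hu.subtype_mk (h := hus))

namespace Setting

open Set

variable {Θ : Type*} [MeasurableSpace Θ] (S : Setting Θ)

section FibreFunction

theorem h_continuousOn : ContinuousOn S.h (Ici 0) :=
  fun x hx => (S.h_hasDeriv x hx).continuousWithinAt

theorem h_strictMonoOn : StrictMonoOn S.h (Ici 0) := by
  refine strictMonoOn_of_hasDerivWithinAt_pos (convex_Ici 0) S.h_continuousOn (f' := S.h')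
    (fun x hx => ?_) (fun x hx => S.h'_pos x (by rwa [interior_Ici] at hx))
  rw [interior_Ici] at hx ⊢
  exact (S.h_hasDeriv x (mem_Ici_of_Ioi hx)).mono Ioi_subset_Ici_self

theorem h_pos {x : ℝ} (hx : 0 < x) : 0 < S.h x := by
  simpa [S.h_zero] using S.h_strictMonoOn self_mem_Ici hx.le hx

theorem slope_h_zero (x : ℝ) : slope S.h 0 x = S.h x / x := by
  rw [slope_def_field, S.h_zero, sub_zero, sub_zero]

theorem h_div_le_one {x : ℝ} (hx : 0 < x) : S.h x / x ≤ 1 := by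
  -- the chord from `0` lies below the tangent `y = x` of the concave `h`
  have := S.h_strictConcave.concaveOn.neg.le_slope_of_hasDerivWithinAt self_mem_Ici hx.le hx
    (S.h_hasDeriv 0 self_mem_Ici).neg
  rw [S.h'_zero, slope_neg_fun, Pi.neg_apply, Pi.neg_apply, slope_h_zero] at this
  linarith

theorem h_div_le_h_div {x y : ℝ} (hx : 0 < x) (hxy : x ≤ y) : S.h y / y ≤ S.h x / x := by
  have := S.h_strictConcave.concaveOn.antitoneOn_slope_gt self_mem_Ici ⟨hx.le, hx⟩
    ⟨hx.le.trans hxy, hx.trans_le hxy⟩ hxy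
  rwa [slope_h_zero, slope_h_zero] at this

theorem tendsto_h_div_nhdsGT_zero : Tendsto (fun x => S.h x / x) (𝓝[>] 0) (𝓝 1) := by
  have := hasDerivWithinAt_iff_tendsto_slope.1 (S.h_hasDeriv 0 self_mem_Ici)
  rwa [S.h'_zero, Ici_sdiff_left, funext S.slope_h_zero] at this

theorem abs_Hfn_le {x M : ℝ} (hx : 0 < x) (hxM : x ≤ M) : |S.Hfn x| ≤ |S.Hfn M| := by
  have hM := hx.trans_le hxM
  have hlow : S.Hfn M ≤ S.Hfn x :=
    Real.log_le_log (div_pos (S.h_pos hM) hM) (S.h_div_le_h_div hx hxM)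
  have hup : S.Hfn x ≤ 0 := Real.log_nonpos (div_pos (S.h_pos hx) hx).le (S.h_div_le_one hx)
  rw [abs_of_nonpos hup, abs_of_nonpos (hlow.trans hup)]
  linarith

theorem tendsto_Hfn_nhdsGT_zero : Tendsto S.Hfn (𝓝[>] 0) (𝓝 0) := by
  have := (Real.continuousAt_log one_ne_zero).tendsto.comp S.tendsto_h_div_nhdsGT_zero
  rwa [Real.log_one] at this

theorem measurable_Hfn_comp {u : Θ → ℝ} (hu : Measurable u) (hu0 : ∀ θ, 0 ≤ u θ) :
    Measurable fun θ => S.Hfn (u θ) :=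
  ((hu.comp_of_continuousOn S.h_continuousOn hu0).div hu).log

end FibreFunction

section FibreIterates

variable {t M : ℝ}

theorem f_pos (θ : Θ) {x : ℝ} (hx : 0 < x) : 0 < S.f t θ x :=
  mul_pos (mul_pos (Real.exp_pos _) (S.g_pos θ)) (S.h_pos hx)

theorem f_le_f (θ : Θ) {x y : ℝ} (hx : 0 ≤ x) (hxy : x ≤ y) : S.f t θ x ≤ S.f t θ y :=
  mul_le_mul_of_nonneg_left (S.h_strictMonoOn.monotoneOn hx (hx.trans hxy) hxy)
    (mul_pos (Real.exp_pos _) (S.g_pos θ)).le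

theorem ψ_succ (n : ℕ) (θ : Θ) :
    S.ψ t M (n + 1) θ = S.f t (S.Tinv θ) (S.ψ t M n (S.Tinv θ)) := by
  simp only [Setting.ψ, Setting.fn, Function.iterate_succ_apply, S.right_inv.iterate n _]

theorem ψ_mem_Ioc (hM : 0 < M) (hMf : ∀ θ, S.f t θ M < M) (n : ℕ) (θ : Θ) :
    S.ψ t M n θ ∈ Ioc 0 M := by
  induction n generalizing θ with
  | zero => exact ⟨hM, le_rfl⟩
  | succ n ih =>
    obtain ⟨hpos, hle⟩ := ih (S.Tinv θ)
    rw [ψ_succ]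
    exact ⟨S.f_pos _ hpos, (S.f_le_f _ hpos.le hle).trans (hMf _).le⟩

theorem ψ_succ_le (hM : 0 < M) (hMf : ∀ θ, S.f t θ M < M) (n : ℕ) (θ : Θ) :
    S.ψ t M (n + 1) θ ≤ S.ψ t M n θ := by
  induction n generalizing θ with
  | zero => exact (S.ψ_succ 0 θ).trans_le (hMf _).le
  | succ n ih =>
    rw [S.ψ_succ (n + 1) θ, S.ψ_succ n θ]
    exact S.f_le_f _ (S.ψ_mem_Ioc hM hMf _ _).1.le (ih _)

theorem measurable_ψ (hM : 0 < M) (hMf : ∀ θ, S.f t θ M < M) (n : ℕ) :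
    Measurable (S.ψ t M n) := by
  induction n with
  | zero => exact measurable_const
  | succ n ih =>
    rw [funext (S.ψ_succ n)]
    exact (measurable_const.mul (S.g_meas.comp S.Tinv_meas)).mul
      ((ih.comp_of_continuousOn S.h_continuousOn fun θ =>
        (S.ψ_mem_Ioc hM hMf n θ).1.le).comp S.Tinv_meas)

theorem tendsto_ψ_of_mem_Nset (hM : 0 < M) (hMf : ∀ θ, S.f t θ M < M) {θ : Θ}
    (hθ : θ ∈ S.Nset t M) : Tendsto (fun n => S.ψ t M n θ) atTop (𝓝[>] 0) := by
  have hanti : Antitone fun n => S.ψ t M (n + 1) θ :=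
    antitone_nat_of_succ_le fun n => S.ψ_succ_le hM hMf (n + 1) θ
  have hbdd : BddBelow (range fun n => S.ψ t M (n + 1) θ) :=
    ⟨0, forall_mem_range.2 fun n => (S.ψ_mem_Ioc hM hMf _ θ).1.le⟩
  have hlim : Tendsto (fun n => S.ψ t M (n + 1) θ) atTop (𝓝 0) :=
    hθ ▸ tendsto_atTop_ciInf hanti hbdd
  exact tendsto_nhdsWithin_of_tendsto_nhds_of_eventually_within _
    ((tendsto_add_atTop_iff_nat 1).1 hlim)
    (Eventually.of_forall fun n => (S.ψ_mem_Ioc hM hMf n θ).1)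

theorem log_ψ_succ (hM : 0 < M) (hMf : ∀ θ, S.f t θ M < M) (n : ℕ) (θ : Θ) :
    Real.log (S.ψ t M (n + 1) θ) = Real.log (S.ψ t M n (S.Tinv θ)) +
      (Real.log (S.g (S.Tinv θ)) - t) + S.Hfn (S.ψ t M n (S.Tinv θ)) := by
  have hx := (S.ψ_mem_Ioc hM hMf n (S.Tinv θ)).1
  rw [ψ_succ, Setting.f, Setting.Hfn,
    Real.log_mul (mul_pos (Real.exp_pos _) (S.g_pos _)).ne' (S.h_pos hx).ne', Real.log_mul (Real.exp_ne_zero _) (S.g_pos _).ne', Real.log_exp,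
    Real.log_div (S.h_pos hx).ne' hx.ne']
  ring

end FibreIterates

section Integrals

variable {t M : ℝ} {μ : Measure Θ}

def toMeasurableEquiv : Θ ≃ᵐ Θ :=
  ⟨⟨S.T, S.Tinv, S.left_inv, S.right_inv⟩, S.T_meas, S.Tinv_meas⟩

theorem measurePreserving_Tinv (hμ : MeasurePreserving S.T μ μ) :
    MeasurePreserving S.Tinv μ μ :=
  MeasurePreserving.symm S.toMeasurableEquiv hμ

theorem integral_comp_Tinv (hμ : MeasurePreserving S.T μ μ) (F : Θ → ℝ) :
    ∫ θ, F (S.Tinv θ) ∂μ = ∫ θ, F θ ∂μ :=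
  (MeasurePreserving.symm S.toMeasurableEquiv hμ).integral_comp' F

theorem integrable_log_g [IsFiniteMeasure μ] (hg : ∃ c : ℝ, 0 < c ∧ ∀ θ, c ≤ S.g θ) :
    Integrable (fun θ => Real.log (S.g θ)) μ := by
  obtain ⟨c, hc, hcg⟩ := hg
  obtain ⟨C, hC⟩ := S.g_bdd
  refine .of_bound (S.g_meas.log.aestronglyMeasurable) (max |Real.log c| |Real.log C|)
    (ae_of_all _ fun θ => ?_)
  exact abs_le_max_abs_abs (Real.log_le_log hc (hcg θ)) (Real.log_le_log (S.g_pos θ) (hC θ))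

theorem integrable_Hfn_ψ [IsFiniteMeasure μ] (hM : 0 < M) (hMf : ∀ θ, S.f t θ M < M) (n : ℕ) :
    Integrable (fun θ => S.Hfn (S.ψ t M n θ)) μ :=
  .of_bound ((S.measurable_Hfn_comp (S.measurable_ψ hM hMf n)
      fun θ => (S.ψ_mem_Ioc hM hMf n θ).1.le).aestronglyMeasurable) |S.Hfn M|
    (ae_of_all _ fun θ => S.abs_Hfn_le (S.ψ_mem_Ioc hM hMf n θ).1 (S.ψ_mem_Ioc hM hMf n θ).2)

theorem integrable_log_ψ [IsFiniteMeasure μ] (hg : ∃ c : ℝ, 0 < c ∧ ∀ θ, c ≤ S.g θ)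
    (hM : 0 < M) (hMf : ∀ θ, S.f t θ M < M) (hμ : MeasurePreserving S.T μ μ) (n : ℕ) :
    Integrable (fun θ => Real.log (S.ψ t M n θ)) μ := by
  induction n with
  | zero => exact integrable_const (Real.log M)
  | succ n ih =>
    rw [funext (S.log_ψ_succ hM hMf n)]
    exact (S.measurePreserving_Tinv hμ).integrable_comp_of_integrable
      ((ih.add ((S.integrable_log_g hg).sub (integrable_const t))).add
        (S.integrable_Hfn_ψ hM hMf n))

theorem integral_log_ψ_succ [IsProbabilityMeasure μ] (hg : ∃ c : ℝ, 0 < c ∧ ∀ θ, c ≤ S.g θ)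
    (hM : 0 < M) (hMf : ∀ θ, S.f t θ M < M) (hμ : MeasurePreserving S.T μ μ) (n : ℕ) :
    ∫ θ, Real.log (S.ψ t M (n + 1) θ) ∂μ = ∫ θ, Real.log (S.ψ t M n θ) ∂μ +
      (S.γfn μ - t) + ∫ θ, S.Hfn (S.ψ t M n θ) ∂μ := by
  have hlogψ := S.integrable_log_ψ hg hM hMf hμ n
  have hlogg : Integrable (fun θ => Real.log (S.g θ) - t) μ :=
    (S.integrable_log_g hg).sub (integrable_const t)
  rw [funext (S.log_ψ_succ hM hMf n), S.integral_comp_Tinv hμ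
      (fun θ => Real.log (S.ψ t M n θ) + (Real.log (S.g θ) - t) + S.Hfn (S.ψ t M n θ)),
    integral_add (f := fun θ => Real.log (S.ψ t M n θ) + (Real.log (S.g θ) - t))
      (hlogψ.add hlogg) (S.integrable_Hfn_ψ hM hMf n),
    integral_add hlogψ hlogg, integral_sub (S.integrable_log_g hg) (integrable_const t),
    integral_const, probReal_univ, one_smul, Setting.γfn]

theorem integral_log_ψ_le [IsProbabilityMeasure μ] (hg : ∃ c : ℝ, 0 < c ∧ ∀ θ, c ≤ S.g θ)
    (hM : 0 < M) (hMf : ∀ θ, S.f t θ M < M) (hμ : MeasurePreserving S.T μ μ) (n : ℕ) :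
    ∫ θ, Real.log (S.ψ t M n θ) ∂μ ≤ Real.log M := by
  have := integral_mono (S.integrable_log_ψ hg hM hMf hμ n) (integrable_const (Real.log M))
    fun θ => Real.log_le_log (S.ψ_mem_Ioc hM hMf n θ).1 (S.ψ_mem_Ioc hM hMf n θ).2
  rwa [integral_const, probReal_univ, one_smul] at this

theorem tendsto_integral_Hfn_ψ [IsProbabilityMeasure μ] (hM : 0 < M)
    (hMf : ∀ θ, S.f t θ M < M) (hN : μ (S.Nset t M) = 1) :
    Tendsto (fun n => ∫ θ, S.Hfn (S.ψ t M n θ) ∂μ) atTop (𝓝 0) := by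
  have hNmeas : MeasurableSet (S.Nset t M) :=
    Measurable.iInf (fun n => S.measurable_ψ hM hMf (n + 1)) (measurableSet_singleton 0)
  have hae : ∀ᵐ θ ∂μ, θ ∈ S.Nset t M := (mem_ae_iff_prob_eq_one hNmeas).2 hN
  simpa using tendsto_integral_of_dominated_convergence (fun _ => |S.Hfn M|)
    (fun n => (S.integrable_Hfn_ψ hM hMf n).aestronglyMeasurable) (integrable_const _)
    (fun n => ae_of_all _ fun θ =>
      S.abs_Hfn_le (S.ψ_mem_Ioc hM hMf n θ).1 (S.ψ_mem_Ioc hM hMf n θ).2)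
    (hae.mono fun θ hθ => S.tendsto_Hfn_nhdsGT_zero.comp (S.tendsto_ψ_of_mem_Nset hM hMf hθ))

end Integrals

end Setting

/-- assuming `inf g > 0`, for a `T`-invariant probability measure `μ`:
if `μ(N_t) = 1` then `γ(μ) ≤ t`. -/
theorem stmt11 {Θ : Type*} [MeasurableSpace Θ] (S : Setting Θ)
    (hg : ∃ c : ℝ, 0 < c ∧ ∀ θ, c ≤ S.g θ)
    (t M : ℝ) (hM : 0 < M) (hMf : ∀ θ, S.f t θ M < M)
    (μ : Measure Θ) [IsProbabilityMeasure μ] (hμ : MeasurePreserving S.T μ μ)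
    (hN : μ (S.Nset t M) = 1) :
    S.γfn μ ≤ t := by
  set L : ℕ → ℝ := fun n => ∫ θ, Real.log (S.ψ t M n θ) ∂μ
  have hL : BddAbove (Set.range L) :=
    ⟨Real.log M, Set.forall_mem_range.2 (S.integral_log_ψ_le hg hM hMf hμ)⟩
  have hdiff : Tendsto (fun n => L (n + 1) - L n) atTop (𝓝 (S.γfn μ - t)) := by
    have := (S.tendsto_integral_Hfn_ψ hM hMf hN).const_add (S.γfn μ - t)
    rw [add_zero] at this
    refine this.congr fun n => ?_
    simp only [L, S.integral_log_ψ_succ hg hM hMf hμ]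
    ring
  linarith [le_zero_of_bddAbove_of_tendsto_sub hL hdiff]
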